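/- arXiv:2412.10837 — 2 statements merged into one kernel-verified Lean document; each statement's English description precedes it below -/
import Mathlib

section
/- The set {D_π : π a set partition of [l+k] having at most n blocks} is a basis of the vector space Hom_{S_n}((ℝⁿ)^{⊗k}, (ℝⁿ)^{⊗l}) of S_n-equivariant linear maps; in particular these maps are linearly independent over ℝ. -/
open Classical
noncomputable section

/-- The `k`-th tensor (Kronecker) power of an `n × n` real matrix. -/
def tensorPow (n k : ℕ) (g : Matrix (Fin n) (Fin n) ℝ) :
    Matrix (Fin k → Fin n) (Fin k → Fin n) ℝ :=
  Matrix.of fun I J => ∏ i, g (I i) (J i)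

/-- The permutation matrix of `σ ∈ S_n`, sending `e_j` to `e_{σ j}`. -/
def permMat (n : ℕ) (σ : Equiv.Perm (Fin n)) : Matrix (Fin n) (Fin n) ℝ :=
  Matrix.of fun i j => if i = σ j then (1 : ℝ) else 0

/-- The matrix `D_π : (ℝⁿ)^{⊗k} → (ℝⁿ)^{⊗l}` associated to a set partition `π` of
`[l+k]` (encoded as a setoid on `Fin (l+k)`, top row first). -/
def Dmat (n l k : ℕ) (π : Setoid (Fin (l + k))) :
    Matrix (Fin l → Fin n) (Fin k → Fin n) ℝ :=
  Matrix.of fun I J =>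
    if ∀ x y, π.r x y → Fin.append I J x = Fin.append I J y then (1 : ℝ) else 0

/-- The space `Hom_{S_n}((ℝⁿ)^{⊗k}, (ℝⁿ)^{⊗l})` of `S_n`-equivariant linear maps,
as a submodule of the space of matrices. -/
def equivSubmodule (n k l : ℕ) :
    Submodule ℝ (Matrix (Fin l → Fin n) (Fin k → Fin n) ℝ) where
  carrier := {φ | ∀ σ : Equiv.Perm (Fin n),
    tensorPow n l (permMat n σ) * φ = φ * tensorPow n k (permMat n σ)}
  add_mem' := by
    intro a b ha hb σ
    rw [Matrix.mul_add, Matrix.add_mul, ha σ, hb σ]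
  zero_mem' := by
    intro σ
    rw [Matrix.mul_zero, Matrix.zero_mul]
  smul_mem' := by
    intro c a ha σ
    rw [Matrix.mul_smul, Matrix.smul_mul, ha σ]

/-!
An `S_n`-equivariant matrix is the same as a function on index pairs `(I, J)` that is constant
on `S_n`-orbits. The orbit of `(I, J)` is determined by the set partition `appendKer I J` of
`[l+k]` recording which entries coincide, and the partitions that occur are exactly those with at
most `n` blocks; so the orbit indicators `orbitMat τ` form a basis. Since
`D_π = ∑_{τ ≥ π} orbitMat τ`, the `D_π` arise from this basis by a unitriangular change of basis
with respect to the refinement order, hence also form a basis.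
-/

open Submodule in
theorem Submodule.span_range_le_of_unitriangular {ι R M : Type*} [PartialOrder ι] [Finite ι]
    [Ring R] [AddCommGroup M] [Module R M] {v w : ι → M}
    (hw : ∀ p, w p - v p ∈ span R (v '' Set.Ioi p)) :
    span R (Set.range v) ≤ span R (Set.range w) := by
  refine span_le.mpr (Set.range_subset_iff.mpr fun p => ?_)
  induction p using WellFoundedGT.induction with
  | _ p ih =>
    have hlower : span R (v '' Set.Ioi p) ≤ span R (Set.range w) :=
      span_le.mpr (Set.image_subset_iff.mpr ih)
    simpa using sub_mem (subset_span (Set.mem_range_self p)) (hlower (hw p))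

theorem Module.Basis.exists_basis_of_unitriangular {ι R M : Type*} [PartialOrder ι] [Finite ι]
    [CommRing R] [Nontrivial R] [AddCommGroup M] [Module R M] (e : Basis ι R M) {w : ι → M}
    (hw : ∀ p, w p - e p ∈ Submodule.span R (e '' Set.Ioi p)) :
    ∃ b : Basis ι R M, ⇑b = w := by
  have := Fintype.ofFinite ι
  exact ⟨basisOfTopLeSpanOfCardEqFinrank w
    (e.span_eq ▸ Submodule.span_range_le_of_unitriangular hw) (Module.finrank_eq_card_basis e).symm,
    coe_basisOfTopLeSpanOfCardEqFinrank ..⟩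

namespace Setoid

variable {α β : Type*}

instance [Finite α] : Finite (Setoid α) :=
  Finite.of_injective (fun r : Setoid α => (r.r : α → α → Prop)) fun _ _ h =>
    Setoid.ext fun x y => iff_of_eq (congrFun₂ h x y)

theorem card_quotient_ker_le [Finite β] (f : α → β) :
    Nat.card (Quotient (ker f)) ≤ Nat.card β :=
  Nat.card_le_card_of_injective _ (kerLift_injective f)

theorem exists_ker_eq_of_card_le [Finite α] [Finite β] {π : Setoid α}
    (h : Nat.card (Quotient π) ≤ Nat.card β) : ∃ f : α → β, ker f = π := by
  have := Fintype.ofFinite (Quotient π)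
  have := Fintype.ofFinite β
  rw [Nat.card_eq_fintype_card, Nat.card_eq_fintype_card] at h
  obtain ⟨e⟩ := Function.Embedding.nonempty_of_card_le h
  exact ⟨e ∘ Quotient.mk π, Setoid.ext fun x y => e.injective.eq_iff.trans Quotient.eq⟩

theorem exists_perm_comp_eq_of_ker_eq [Finite α] {f g : α → β} (h : ker f = ker g) :
    ∃ σ : Equiv.Perm β, σ ∘ f = g := by
  classical
  have : Finite {y | y ∈ Set.range f} := Set.finite_range f
  let e : Set.range f ≃ Set.range g := (quotientKerEquivRange f).symm.trans
    ((Quotient.congrRight fun x y => by rw [h]).trans (quotientKerEquivRange g))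
  refine ⟨e.extendSubtype, funext fun x => ?_⟩
  have hx : (quotientKerEquivRange f).symm ⟨f x, x, rfl⟩ = Quotient.mk _ x :=
    (Equiv.symm_apply_eq _).mpr rfl
  rw [Function.comp_apply, Equiv.extendSubtype_apply_of_mem e _ ⟨x, rfl⟩]
  simp only [e, Equiv.trans_apply, hx]
  rfl

end Setoid

theorem Fin.comp_append {α β : Type*} {l k : ℕ} (σ : α → β) (I : Fin l → α) (J : Fin k → α) :
    σ ∘ Fin.append I J = Fin.append (σ ∘ I) (σ ∘ J) := by
  funext x
  cases x using Fin.addCases <;> simp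

section Equivariance

variable {n k l : ℕ}

theorem tensorPow_permMat_apply (σ : Equiv.Perm (Fin n)) (I J : Fin k → Fin n) :
    tensorPow n k (permMat n σ) I J = if I = σ ∘ J then 1 else 0 := by
  simp only [tensorPow, permMat, Matrix.of_apply, Finset.prod_boole, Finset.mem_univ,
    true_implies, funext_iff, Function.comp_apply]

theorem tensorPow_permMat_mul_apply (σ : Equiv.Perm (Fin n))
    (φ : Matrix (Fin l → Fin n) (Fin k → Fin n) ℝ) (I : Fin l → Fin n) (J : Fin k → Fin n) :
    (tensorPow n l (permMat n σ) * φ) I J = φ (σ.symm ∘ I) J := by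
  simp [Matrix.mul_apply, tensorPow_permMat_apply, ← Equiv.symm_comp_eq]

theorem mul_tensorPow_permMat_apply (σ : Equiv.Perm (Fin n))
    (φ : Matrix (Fin l → Fin n) (Fin k → Fin n) ℝ) (I : Fin l → Fin n) (J : Fin k → Fin n) :
    (φ * tensorPow n k (permMat n σ)) I J = φ I (σ ∘ J) := by
  simp [Matrix.mul_apply, tensorPow_permMat_apply]

theorem mem_equivSubmodule_iff (φ : Matrix (Fin l → Fin n) (Fin k → Fin n) ℝ) :
    φ ∈ equivSubmodule n k l ↔ ∀ (σ : Equiv.Perm (Fin n)) I J, φ (σ ∘ I) (σ ∘ J) = φ I J := by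
  change (∀ σ, _ = _) ↔ _
  simp only [← Matrix.ext_iff, tensorPow_permMat_mul_apply, mul_tensorPow_permMat_apply]
  refine forall_congr' fun σ => ⟨fun h I J => ?_, fun h I J => ?_⟩
  · simpa [← Function.comp_assoc] using (h (σ ∘ I) J).symm
  · simpa [← Function.comp_assoc] using (h (σ.symm ∘ I) J).symm

end Equivariance

section Partitions

variable {n k l : ℕ}

abbrev PartitionAtMost (m n : ℕ) := {π : Setoid (Fin m) // Nat.card (Quotient π) ≤ n}

def appendKer (I : Fin l → Fin n) (J : Fin k → Fin n) : Setoid (Fin (l + k)) :=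
  Setoid.ker (Fin.append I J)

theorem card_quotient_appendKer_le (I : Fin l → Fin n) (J : Fin k → Fin n) :
    Nat.card (Quotient (appendKer I J)) ≤ n :=
  (Setoid.card_quotient_ker_le _).trans_eq (Nat.card_fin n)

theorem exists_appendKer_eq (π : PartitionAtMost (l + k) n) :
    ∃ IJ : (Fin l → Fin n) × (Fin k → Fin n), appendKer IJ.1 IJ.2 = π.1 := by
  obtain ⟨f, hf⟩ :=
    Setoid.exists_ker_eq_of_card_le (β := Fin n) (π.2.trans_eq (Nat.card_fin n).symm)
  exact ⟨(Fin.appendEquiv l k).symm f, by simp [appendKer, Fin.append_castAdd_natAdd, hf]⟩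

theorem appendKer_comp (σ : Equiv.Perm (Fin n)) (I : Fin l → Fin n) (J : Fin k → Fin n) :
    appendKer (σ ∘ I) (σ ∘ J) = appendKer I J := by
  simp only [appendKer, ← Fin.comp_append]
  exact Setoid.ext fun x y => σ.injective.eq_iff

theorem apply_eq_of_appendKer_eq {φ : Matrix (Fin l → Fin n) (Fin k → Fin n) ℝ}
    (hφ : φ ∈ equivSubmodule n k l) {I I' : Fin l → Fin n} {J J' : Fin k → Fin n}
    (h : appendKer I J = appendKer I' J') : φ I J = φ I' J' := by
  obtain ⟨σ, hσ⟩ := Setoid.exists_perm_comp_eq_of_ker_eq h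
  rw [Fin.comp_append] at hσ
  obtain ⟨rfl, rfl⟩ := Prod.ext_iff.mp
    ((Fin.appendEquiv l k).injective (a₁ := (σ ∘ I, σ ∘ J)) (a₂ := (I', J')) hσ)
  exact ((mem_equivSubmodule_iff φ).mp hφ σ I J).symm

theorem Dmat_apply (π : Setoid (Fin (l + k))) (I : Fin l → Fin n) (J : Fin k → Fin n) :
    Dmat n l k π I J = if π ≤ appendKer I J then 1 else 0 :=
  if_congr ⟨fun h _ _ => h _ _, fun h _ _ => @h _ _⟩ rfl rfl

theorem Dmat_mem_equivSubmodule (π : Setoid (Fin (l + k))) :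
    Dmat n l k π ∈ equivSubmodule n k l :=
  (mem_equivSubmodule_iff _).mpr fun σ I J => by simp only [Dmat_apply, appendKer_comp]

def orbitMat (π : Setoid (Fin (l + k))) : Matrix (Fin l → Fin n) (Fin k → Fin n) ℝ :=
  Matrix.of fun I J => if appendKer I J = π then 1 else 0

theorem orbitMat_mem_equivSubmodule (π : Setoid (Fin (l + k))) :
    orbitMat π ∈ equivSubmodule n k l :=
  (mem_equivSubmodule_iff _).mpr fun σ I J => by
    simp only [orbitMat, Matrix.of_apply, appendKer_comp]

end Partitions

section OrbitBasis

variable (n k l : ℕ)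

instance (m : ℕ) : Fintype (PartitionAtMost m n) := Fintype.ofFinite _

def partitionRep (π : PartitionAtMost (l + k) n) : (Fin l → Fin n) × (Fin k → Fin n) :=
  (exists_appendKer_eq π).choose

theorem appendKer_partitionRep (π : PartitionAtMost (l + k) n) :
    appendKer (partitionRep n k l π).1 (partitionRep n k l π).2 = π.1 :=
  (exists_appendKer_eq π).choose_spec

variable {n k l} in
def appendKerAtMost (I : Fin l → Fin n) (J : Fin k → Fin n) : PartitionAtMost (l + k) n :=
  ⟨appendKer I J, card_quotient_appendKer_le I J⟩

theorem orbitMat_dualBases : Module.DualBases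
    (fun π : PartitionAtMost (l + k) n =>
      (⟨orbitMat π.1, orbitMat_mem_equivSubmodule π.1⟩ : equivSubmodule n k l))
    (fun π => Matrix.entryLinearMap ℝ ℝ (partitionRep n k l π).1 (partitionRep n k l π).2 ∘ₗ
      (equivSubmodule n k l).subtype) where
  eval_same π := by simp [orbitMat, appendKer_partitionRep]
  eval_of_ne π τ hne := by
    simp [orbitMat, appendKer_partitionRep, ← Subtype.ext_iff, hne]
  total {φ ψ} h := by
    ext I J
    have hrep := (appendKer_partitionRep n k l (appendKerAtMost I J)).symm
    simpa [apply_eq_of_appendKer_eq φ.2 hrep, apply_eq_of_appendKer_eq ψ.2 hrep]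
      using h (appendKerAtMost I J)

def orbitBasis : Module.Basis (PartitionAtMost (l + k) n) ℝ (equivSubmodule n k l) :=
  (orbitMat_dualBases n k l).basis

theorem coe_orbitBasis_apply (π : PartitionAtMost (l + k) n) :
    (orbitBasis n k l π : Matrix (Fin l → Fin n) (Fin k → Fin n) ℝ) = orbitMat π.1 := by
  simp [orbitBasis]

variable {n k l}

theorem Dmat_sub_orbitMat (π : PartitionAtMost (l + k) n) :
    Dmat n l k π.1 - orbitMat π.1 = ∑ τ with π < τ, orbitMat τ.1 := by
  ext I J
  have hκ (τ : PartitionAtMost (l + k) n) : appendKer I J = τ.1 ↔ appendKerAtMost I J = τ := by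
    rw [Subtype.ext_iff]; rfl
  simp only [Matrix.sub_apply, Matrix.sum_apply, Dmat_apply, orbitMat, Matrix.of_apply, hκ,
    Finset.sum_ite_eq, Finset.mem_filter]
  change ((if π ≤ appendKerAtMost I J then (1 : ℝ) else 0) - _) = _
  by_cases hle : π ≤ appendKerAtMost I J <;> by_cases heq : appendKerAtMost I J = π <;>
    simp [hle, heq, lt_iff_le_and_ne, Ne.symm]

theorem Dmat_sub_orbitBasis_mem_span (π : PartitionAtMost (l + k) n) :
    (⟨Dmat n l k π.1, Dmat_mem_equivSubmodule π.1⟩ : equivSubmodule n k l) - orbitBasis n k l π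
      ∈ Submodule.span ℝ (orbitBasis n k l '' Set.Ioi π) := by
  have hsum : (⟨Dmat n l k π.1, Dmat_mem_equivSubmodule π.1⟩ : equivSubmodule n k l) -
      orbitBasis n k l π = ∑ τ with π < τ, orbitBasis n k l τ :=
    Subtype.ext (by simp [coe_orbitBasis_apply, Dmat_sub_orbitMat])
  rw [hsum]
  exact Submodule.sum_mem _ fun τ hτ =>
    Submodule.subset_span ⟨τ, (Finset.mem_filter.mp hτ).2, rfl⟩

end OrbitBasis

theorem Dmat_basis_general (n k l : ℕ) :
    ∃ b : Module.Basis {π : Setoid (Fin (l + k)) // Nat.card (Quotient π) ≤ n} ℝ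
      (equivSubmodule n k l),
      ∀ p, (b p : Matrix (Fin l → Fin n) (Fin k → Fin n) ℝ) = Dmat n l k p.val := by
  obtain ⟨b, hb⟩ :=
    (orbitBasis n k l).exists_basis_of_unitriangular Dmat_sub_orbitBasis_mem_span
  exact ⟨b, fun π => by rw [hb]⟩

/-- the maps `D_π`, for `π` a set partition of `[l+k]` with at most `n`
blocks, form a basis of `Hom_{S_n}((ℝⁿ)^{⊗k}, (ℝⁿ)^{⊗l})` (in particular they are
linearly independent over `ℝ`). -/
theorem Dmat_basis (n k l : ℕ) (hn : 0 < n) :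
    ∃ b : Module.Basis {π : Setoid (Fin (l + k)) // Nat.card (Quotient π) ≤ n} ℝ
      (equivSubmodule n k l),
      ∀ p, (b p : Matrix (Fin l → Fin n) (Fin k → Fin n) ℝ) = Dmat n l k p.val :=
  Dmat_basis_general n k l
end
end

section
/- For every set partition π of [l+k] there exist permutations σ_l ∈ S_l and σ_k ∈ S_k such that the relabeled partition π′ := (σ_l,σ_k)·π is algorithmically planar, meaning: (i) every block of π′ lying entirely in the top row {1,…,l} is a set of consecutive integers, and these blocks together occupy an initial segment of the top row; (ii) every block of π′ lying entirely in the bottom row {l+1,…,l+k} is a set of consecutive integers, these blocks together occupy a final segment of the bottom row, and their sizes are non-decreasing from left to right; (iii) for every block of π′ meeting both rows, its top-row part and its bottom-row part are each sets of consecutive integers, and for any two such blocks B, B′, all top-row elements of B precede all top-row elements of B′ if and only if all bottom-row elements of B precede all bottom-row elements of B′ (no two blocks cross). Consequently D_π = Q_{σ_l}^{-1} ∘ D_{π′} ∘ Q_{σ_k}. -/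
open Classical
noncomputable section

/-- The relabeling `τ` of `[l+k]` induced by `σ_l ∈ S_l` on the top row and
`σ_k ∈ S_k` on the bottom row. -/
def permSum (l k : ℕ) (σl : Equiv.Perm (Fin l)) (σk : Equiv.Perm (Fin k))
    (x : Fin (l + k)) : Fin (l + k) :=
  Fin.addCases (motive := fun _ => Fin (l + k))
    (fun a => Fin.castAdd k (σl a)) (fun b => Fin.natAdd l (σk b)) x

/-- The set partition `(σ_l, σ_k) · π`, whose blocks are the images of the blocks of
`π` under the relabeling `τ`. -/
def relabelSetoid (l k : ℕ) (σl : Equiv.Perm (Fin l)) (σk : Equiv.Perm (Fin k))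
    (π : Setoid (Fin (l + k))) : Setoid (Fin (l + k)) :=
  Setoid.comap (permSum l k σl⁻¹ σk⁻¹) π

/-- The matrix `Q_σ` permuting tensor factors: `Q_σ e_J = e_{J ∘ σ⁻¹}`. -/
def Qmat (n m : ℕ) (σ : Equiv.Perm (Fin m)) :
    Matrix (Fin m → Fin n) (Fin m → Fin n) ℝ :=
  Matrix.of fun I J => if I = J ∘ ⇑σ⁻¹ then (1 : ℝ) else 0

/-- The block of `x` lies entirely in the top row `{1,…,l}`. -/
def TopOnly (l k : ℕ) (π : Setoid (Fin (l + k))) (x : Fin (l + k)) : Prop :=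
  ∀ y, π.r x y → y.val < l

/-- The block of `x` lies entirely in the bottom row `{l+1,…,l+k}`. -/
def BotOnly (l k : ℕ) (π : Setoid (Fin (l + k))) (x : Fin (l + k)) : Prop :=
  ∀ y, π.r x y → l ≤ y.val

/-- A set of vertices is a set of consecutive integers. -/
def Consec {N : ℕ} (S : Set (Fin N)) : Prop :=
  ∀ a b c : Fin N, a ∈ S → c ∈ S → a ≤ b → b ≤ c → b ∈ S

/-- A set partition `π` of `[l+k]` is *algorithmically planar*:
(i) top-row-only blocks are consecutive and occupy an initial segment of the top row;
(ii) bottom-row-only blocks are consecutive, occupy a final segment of the bottom row,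
and have sizes non-decreasing from left to right;
(iii) for blocks meeting both rows, the top part and bottom part are each consecutive,
and no two such blocks cross. -/
def AlgPlanar (l k : ℕ) (π : Setoid (Fin (l + k))) : Prop :=
  (∀ x, TopOnly l k π x → Consec {y | π.r x y}) ∧
  (∀ x y, TopOnly l k π x → y ≤ x → TopOnly l k π y) ∧
  (∀ x, BotOnly l k π x → Consec {y | π.r x y}) ∧
  (∀ x y, BotOnly l k π x → x ≤ y → BotOnly l k π y) ∧
  (∀ x y, BotOnly l k π x → BotOnly l k π y → x < y → ¬ π.r x y →
    Nat.card {z | π.r x z} ≤ Nat.card {z | π.r y z}) ∧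
  (∀ x, ¬ TopOnly l k π x → ¬ BotOnly l k π x →
    Consec {y | π.r x y ∧ y.val < l} ∧ Consec {y | π.r x y ∧ l ≤ y.val}) ∧
  (∀ x x', ¬ TopOnly l k π x → ¬ BotOnly l k π x →
    ¬ TopOnly l k π x' → ¬ BotOnly l k π x' → ¬ π.r x x' →
    ((∀ a b, π.r x a → a.val < l → π.r x' b → b.val < l → a < b) ↔
     (∀ a b, π.r x a → l ≤ a.val → π.r x' b → l ≤ b.val → a < b)))

/-!
Label every block by a key in a linear order, injectively, so that top-only blocks come first,
bottom-only blocks come last and among themselves by size, and blocks meeting both rows sit in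
between. Sorting each row by the key of the block of its points makes the key monotone along
both rows. Then every block meets each row in an interval, the top-only and bottom-only blocks
are pushed to the ends of their rows, and two blocks meeting both rows appear in the same order
on both rows, namely the order of their keys. Relabeling by row permutations only conjugates
`D_π` by the tensor permutations `Q_σ`.
-/

section Relabel

variable {n l k : ℕ}

def rowPerm (σl : Equiv.Perm (Fin l)) (σk : Equiv.Perm (Fin k)) : Equiv.Perm (Fin (l + k)) :=
  finSumFinEquiv.permCongr (σl.sumCongr σk)

@[simp]
lemma rowPerm_castAdd (σl : Equiv.Perm (Fin l)) (σk : Equiv.Perm (Fin k)) (a : Fin l) :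
    rowPerm σl σk (Fin.castAdd k a) = Fin.castAdd k (σl a) := by
  simp [rowPerm]

@[simp]
lemma rowPerm_natAdd (σl : Equiv.Perm (Fin l)) (σk : Equiv.Perm (Fin k)) (b : Fin k) :
    rowPerm σl σk (Fin.natAdd l b) = Fin.natAdd l (σk b) := by
  simp [rowPerm]

lemma coe_rowPerm (σl : Equiv.Perm (Fin l)) (σk : Equiv.Perm (Fin k)) :
    ⇑(rowPerm σl σk) = permSum l k σl σk := by
  funext x
  induction x using Fin.addCases <;> simp [permSum]

lemma rowPerm_val_lt_iff (σl : Equiv.Perm (Fin l)) (σk : Equiv.Perm (Fin k)) (x : Fin (l + k)) :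
    (rowPerm σl σk x).val < l ↔ x.val < l := by
  induction x using Fin.addCases <;> simp

lemma relabelSetoid_eq_comap (σl : Equiv.Perm (Fin l)) (σk : Equiv.Perm (Fin k))
    (π : Setoid (Fin (l + k))) :
    relabelSetoid l k σl σk π = π.comap (rowPerm σl⁻¹ σk⁻¹) := by
  rw [relabelSetoid, coe_rowPerm]

lemma append_comp_rowPerm (σl : Equiv.Perm (Fin l)) (σk : Equiv.Perm (Fin k))
    (I : Fin l → Fin n) (J : Fin k → Fin n) :
    Fin.append I J ∘ rowPerm σl σk = Fin.append (I ∘ σl) (J ∘ σk) := by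
  funext x
  induction x using Fin.addCases <;> simp

lemma Qmat_mul_apply {β : Type*} {m : ℕ} (σ : Equiv.Perm (Fin m))
    (M : Matrix (Fin m → Fin n) β ℝ) (I : Fin m → Fin n) (J : β) :
    (Qmat n m σ * M) I J = M (I ∘ σ) J := by
  have hI : ∀ I', I = I' ∘ σ.symm ↔ I' = I ∘ σ := fun I' => by
    constructor <;> rintro rfl <;> funext i <;> simp
  simp [Matrix.mul_apply, Qmat, hI]

lemma mul_Qmat_apply {β : Type*} {m : ℕ} (σ : Equiv.Perm (Fin m))
    (M : Matrix β (Fin m → Fin n) ℝ) (I : β) (J : Fin m → Fin n) :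
    (M * Qmat n m σ) I J = M I (J ∘ ⇑σ⁻¹) := by
  simp [Matrix.mul_apply, Qmat]

lemma Dmat_comap_rowPerm_apply (σl : Equiv.Perm (Fin l)) (σk : Equiv.Perm (Fin k))
    (π : Setoid (Fin (l + k))) (I : Fin l → Fin n) (J : Fin k → Fin n) :
    Dmat n l k (π.comap (rowPerm σl σk)) (I ∘ σl) (J ∘ σk) = Dmat n l k π I J := by
  simp only [Dmat, Matrix.of_apply, Setoid.comap_rel, ← append_comp_rowPerm, Function.comp_apply]
  refine if_congr ?_ rfl rfl
  constructor
  · intro h x y hxy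
    simpa using h ((rowPerm σl σk).symm x) ((rowPerm σl σk).symm y) (by simpa using hxy)
  · intro h x y hxy
    exact h _ _ hxy

theorem Dmat_eq_Qmat_mul_Dmat_relabelSetoid_mul_Qmat (σl : Equiv.Perm (Fin l))
    (σk : Equiv.Perm (Fin k)) (π : Setoid (Fin (l + k))) :
    Dmat n l k π =
      Qmat n l σl⁻¹ * Dmat n l k (relabelSetoid l k σl σk π) * Qmat n k σk := by
  ext I J
  rw [mul_Qmat_apply, Qmat_mul_apply, relabelSetoid_eq_comap, Dmat_comap_rowPerm_apply]

end Relabel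

section Planar

variable {l k : ℕ} {π : Setoid (Fin (l + k))} {α : Type*} [LinearOrder α]
  {κ : Fin (l + k) → α}

lemma exists_top_of_not_botOnly {x : Fin (l + k)} (hx : ¬ BotOnly l k π x) :
    ∃ a, π x a ∧ a.val < l := by
  simpa [BotOnly] using hx

lemma exists_bot_of_not_topOnly {x : Fin (l + k)} (hx : ¬ TopOnly l k π x) :
    ∃ a, π x a ∧ l ≤ a.val := by
  simpa [TopOnly] using hx

lemma not_topOnly_of_botOnly {x : Fin (l + k)} (hx : BotOnly l k π x) : ¬ TopOnly l k π x :=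
  fun h => (h x (π.refl' x)).not_ge (hx x (π.refl' x))

lemma consec_block_inter {s : Set (Fin (l + k))} (hκ : ∀ x y, κ x = κ y ↔ π x y)
    (hs : s.OrdConnected) (hmono : MonotoneOn κ s) (x : Fin (l + k)) :
    Consec {y | π x y ∧ y ∈ s} := by
  rintro a b c ⟨ha, has⟩ ⟨hc, hcs⟩ hab hbc
  have hbs : b ∈ s := hs.out has hcs ⟨hab, hbc⟩
  refine ⟨(hκ x b).1 (le_antisymm ?_ ?_), hbs⟩
  · rw [(hκ x a).2 ha]
    exact hmono has hbs hab
  · rw [(hκ x c).2 hc]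
    exact hmono hbs hcs hbc

lemma forall_lt_iff_lt {s : Set (Fin (l + k))} (hκ : ∀ x y, κ x = κ y ↔ π x y)
    (hmono : MonotoneOn κ s) {x x' : Fin (l + k)} (hx : ∃ a, π x a ∧ a ∈ s)
    (hx' : ∃ b, π x' b ∧ b ∈ s) (hxx' : ¬ π x x') :
    (∀ a b, π x a → a ∈ s → π x' b → b ∈ s → a < b) ↔ κ x < κ x' := by
  constructor
  · intro h
    obtain ⟨a, ha, has⟩ := hx
    obtain ⟨b, hb, hbs⟩ := hx'
    refine lt_of_le_of_ne ?_ (mt (hκ x x').1 hxx')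
    rw [(hκ x a).2 ha, (hκ x' b).2 hb]
    exact hmono has hbs (h a b ha has hb hbs).le
  · intro h a b ha has hb hbs
    by_contra! hba
    have := hmono hbs has hba
    rw [← (hκ x a).2 ha, ← (hκ x' b).2 hb] at this
    exact this.not_gt h

lemma ordConnected_top : {x : Fin (l + k) | x.val < l}.OrdConnected :=
  ⟨fun _ _ _ hy _ hz => (Fin.le_iff_val_le_val.1 hz.2).trans_lt hy⟩

lemma ordConnected_bot : {x : Fin (l + k) | l ≤ x.val}.OrdConnected :=
  ⟨fun _ hx _ _ _ hz => hx.trans (Fin.le_iff_val_le_val.1 hz.1)⟩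

structure IsPlanarKey (π : Setoid (Fin (l + k))) (κ : Fin (l + k) → α) : Prop where
  eq_iff : ∀ x y, κ x = κ y ↔ π x y
  topOnly_lt : ∀ x y, TopOnly l k π x → ¬ TopOnly l k π y → κ x < κ y
  lt_botOnly : ∀ x y, ¬ BotOnly l k π x → BotOnly l k π y → κ x < κ y
  card_le : ∀ x y, BotOnly l k π x → BotOnly l k π y → κ x ≤ κ y →
    Nat.card {z | π x z} ≤ Nat.card {z | π y z}

theorem IsPlanarKey.algPlanar (h : IsPlanarKey π κ)
    (htop : MonotoneOn κ {x | x.val < l}) (hbot : MonotoneOn κ {x | l ≤ x.val}) :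
    AlgPlanar l k π := by
  have hrefl := π.refl'
  refine ⟨fun x hx => ?_, fun x y hx hyx => ?_, fun x hx => ?_, fun x y hx hxy => ?_,
    fun x y hx hy hxy _ => ?_, fun x _ _ => ⟨?_, ?_⟩, fun x x' hxt hxb hx't hx'b hxx' => ?_⟩
  · have hblock : {y | π x y} = {y | π x y ∧ y.val < l} :=
      Set.ext fun y => ⟨fun hy => ⟨hy, hx y hy⟩, And.left⟩
    rw [hblock]
    exact consec_block_inter h.eq_iff ordConnected_top htop x
  · by_contra hy
    have hxl : x.val < l := hx x (hrefl x)
    exact (h.topOnly_lt x y hx hy).not_ge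
      (htop ((Fin.le_iff_val_le_val.1 hyx).trans_lt hxl) hxl hyx)
  · have hblock : {y | π x y} = {y | π x y ∧ l ≤ y.val} :=
      Set.ext fun y => ⟨fun hy => ⟨hy, hx y hy⟩, And.left⟩
    rw [hblock]
    exact consec_block_inter h.eq_iff ordConnected_bot hbot x
  · by_contra hy
    have hxl : l ≤ x.val := hx x (hrefl x)
    exact (h.lt_botOnly y x hy hx).not_ge
      (hbot hxl (hxl.trans (Fin.le_iff_val_le_val.1 hxy)) hxy)
  · exact h.card_le x y hx hy (hbot (hx x (hrefl x)) (hy y (hrefl y)) hxy.le)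
  · exact consec_block_inter h.eq_iff ordConnected_top htop x
  · exact consec_block_inter h.eq_iff ordConnected_bot hbot x
  · exact (forall_lt_iff_lt h.eq_iff htop (exists_top_of_not_botOnly hxb)
      (exists_top_of_not_botOnly hx'b) hxx').trans
      (forall_lt_iff_lt h.eq_iff hbot (exists_bot_of_not_topOnly hxt)
      (exists_bot_of_not_topOnly hx't) hxx').symm

section Comap

variable {τ : Equiv.Perm (Fin (l + k))}

lemma topOnly_comap (hτ : ∀ x, (τ x).val < l ↔ x.val < l) (x : Fin (l + k)) :
    TopOnly l k (π.comap τ) x ↔ TopOnly l k π (τ x) :=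
  τ.forall_congr fun y => by rw [Setoid.comap_rel, hτ]

lemma botOnly_comap (hτ : ∀ x, (τ x).val < l ↔ x.val < l) (x : Fin (l + k)) :
    BotOnly l k (π.comap τ) x ↔ BotOnly l k π (τ x) :=
  τ.forall_congr fun y => by rw [Setoid.comap_rel, ← not_lt, ← not_lt, hτ]

lemma card_comap (x : Fin (l + k)) :
    Nat.card {z | π.comap τ x z} = Nat.card {z | π (τ x) z} :=
  Nat.card_congr (τ.subtypeEquiv fun _ => Iff.rfl)

theorem IsPlanarKey.comap (h : IsPlanarKey π κ) (hτ : ∀ x, (τ x).val < l ↔ x.val < l) :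
    IsPlanarKey (π.comap τ) (κ ∘ τ) where
  eq_iff x y := h.eq_iff (τ x) (τ y)
  topOnly_lt x y hx hy :=
    h.topOnly_lt _ _ ((topOnly_comap hτ x).1 hx) (mt (topOnly_comap hτ y).2 hy)
  lt_botOnly x y hx hy :=
    h.lt_botOnly _ _ (mt (botOnly_comap hτ x).2 hx) ((botOnly_comap hτ y).1 hy)
  card_le x y hx hy hxy := by
    rw [card_comap, card_comap]
    exact h.card_le _ _ ((botOnly_comap hτ x).1 hx) ((botOnly_comap hτ y).1 hy) hxy

end Comap

def rowClass (π : Setoid (Fin (l + k))) (x : Fin (l + k)) : ℕ :=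
  if TopOnly l k π x then 0 else if BotOnly l k π x then 2 else 1

/-- Class `0`, `1`, `2` for top-only, mixed, bottom-only blocks; the chosen representative
`out` of the block makes the key injective on blocks. -/
def blockKey (π : Setoid (Fin (l + k))) (x : Fin (l + k)) : ℕ ×ₗ ℕ ×ₗ Fin (l + k) :=
  toLex (rowClass π x,
    toLex (if BotOnly l k π x then Nat.card {y | π x y} else 0, (Quotient.mk π x).out))

lemma blockKey_congr {x y : Fin (l + k)} (h : π x y) : blockKey π x = blockKey π y := by
  have hxy : ∀ z, π x z ↔ π y z := fun z => ⟨π.trans' (π.symm' h), π.trans' h⟩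
  simp only [blockKey, rowClass, TopOnly, BotOnly, hxy, Quotient.sound h]
  congr

theorem isPlanarKey_blockKey (π : Setoid (Fin (l + k))) : IsPlanarKey π (blockKey π) where
  eq_iff x y := by
    refine ⟨fun h => ?_, blockKey_congr⟩
    have hout : (Quotient.mk π x).out = (Quotient.mk π y).out := by
      simpa [blockKey] using congrArg (fun κ => (ofLex (ofLex κ).2).2) h
    exact Quotient.exact (Quotient.out_inj.1 hout)
  topOnly_lt x y hx hy := by
    refine Prod.Lex.toLex_lt_toLex.2 (Or.inl ?_)
    simp only [rowClass, if_pos hx, if_neg hy]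
    split_ifs <;> norm_num
  lt_botOnly x y hx hy := by
    refine Prod.Lex.toLex_lt_toLex.2 (Or.inl ?_)
    simp only [rowClass, if_pos hy, if_neg (not_topOnly_of_botOnly hy), if_neg hx]
    split_ifs <;> norm_num
  card_le x y hx hy hxy := by
    have hclass : ∀ z, BotOnly l k π z → rowClass π z = 2 := fun z hz => by
      simp [rowClass, hz, not_topOnly_of_botOnly hz]
    rw [blockKey, blockKey, hclass x hx, hclass y hy] at hxy
    obtain h | ⟨-, h⟩ := Prod.Lex.toLex_le_toLex.1 hxy
    · exact absurd h (lt_irrefl 2)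
    · simpa [hx, hy] using Prod.Lex.monotone_fst _ _ h

lemma monotoneOn_top_of_monotone_comp_castAdd {f : Fin (l + k) → α}
    (hf : Monotone (f ∘ Fin.castAdd k)) : MonotoneOn f {x | x.val < l} :=
  fun x hx y hy hxy => hf (show (⟨x, hx⟩ : Fin l) ≤ ⟨y, hy⟩ from hxy)

lemma monotoneOn_bot_of_monotone_comp_natAdd {f : Fin (l + k) → α}
    (hf : Monotone (f ∘ Fin.natAdd l)) : MonotoneOn f {x | l ≤ x.val} := by
  intro x hx y hy hxy
  induction x using Fin.addCases with
  | left a => exact absurd hx (by simp)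
  | right p =>
    induction y using Fin.addCases with
    | left b => exact absurd hy (by simp)
    | right q => exact hf ((Fin.natAdd_le_natAdd_iff l).1 hxy)

theorem IsPlanarKey.algPlanar_relabelSetoid_sort (h : IsPlanarKey π κ) :
    AlgPlanar l k (relabelSetoid l k (Tuple.sort (κ ∘ Fin.castAdd k))⁻¹
      (Tuple.sort (κ ∘ Fin.natAdd l))⁻¹ π) := by
  rw [relabelSetoid_eq_comap, inv_inv, inv_inv]
  refine (h.comap (rowPerm_val_lt_iff _ _)).algPlanar ?_ ?_
  · refine monotoneOn_top_of_monotone_comp_castAdd ?_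
    simpa [Function.comp_def] using Tuple.monotone_sort (κ ∘ Fin.castAdd k)
  · refine monotoneOn_bot_of_monotone_comp_natAdd ?_
    simpa [Function.comp_def] using Tuple.monotone_sort (κ ∘ Fin.natAdd l)

end Planar

theorem exists_algPlanar_relabel_general (n k l : ℕ) (π : Setoid (Fin (l + k))) :
    ∃ (σl : Equiv.Perm (Fin l)) (σk : Equiv.Perm (Fin k)),
      AlgPlanar l k (relabelSetoid l k σl σk π) ∧
      Dmat n l k π =
        Qmat n l σl⁻¹ * Dmat n l k (relabelSetoid l k σl σk π) * Qmat n k σk :=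
  ⟨_, _, (isPlanarKey_blockKey π).algPlanar_relabelSetoid_sort,
    Dmat_eq_Qmat_mul_Dmat_relabelSetoid_mul_Qmat _ _ π⟩

/-- every set partition `π` of `[l+k]` can be relabeled by permutations
`σ_l ∈ S_l`, `σ_k ∈ S_k` of the rows into an algorithmically planar set partition
`π′ = (σ_l,σ_k)·π`, and consequently `D_π = Q_{σ_l}⁻¹ ∘ D_{π′} ∘ Q_{σ_k}`. -/
theorem exists_algPlanar_relabel (n k l : ℕ) (hn : 0 < n) (π : Setoid (Fin (l + k))) :
    ∃ (σl : Equiv.Perm (Fin l)) (σk : Equiv.Perm (Fin k)),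
      AlgPlanar l k (relabelSetoid l k σl σk π) ∧
      Dmat n l k π =
        Qmat n l σl⁻¹ * Dmat n l k (relabelSetoid l k σl σk π) * Qmat n k σk :=
  exists_algPlanar_relabel_general n k l π
end
end
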